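/- arXiv:2108.09908 — 3 statements merged into one kernel-verified Lean document; each statement's English description precedes it below -/
import Mathlib

section
/- Let U(z) = tanh(z/√2), F″(u) = 3u² − 1, and let κ, c ∈ ℝ. Suppose u₁ : ℝ → ℝ is twice continuously differentiable with u₁ and u₁′ both bounded, and suppose the solvability equation F″(U(z))·u₁(z) − u₁″(z) − κ·U′(z) = c holds for all z ∈ ℝ. Then c = −κS/2, where S = ∫_{−∞}^{+∞} U′(z)² dz = 2√2/3. -/
/-!
`U` is the heteroclinic solution of `U'' = F'(U) = U³ - U`; differentiating, `U'` lies in the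
kernel of the linearized operator `L = F''(U) - d²/dz²`. For any `u` and any `ψ` with
`ψ'' = q ψ`, the Wronskian `u' ψ - u ψ'` has derivative `-(q u - u'') ψ`. With `ψ = U'`,
`q = F''(U)` and `L u₁ = κ U' + c`, the Wronskian vanishes at `±∞` because `u₁, u₁'` are
bounded while `U', U''` decay, so `∫ (κ U' + c) U' = κ S + 2 c = 0`, using
`∫ U' = U(∞) - U(-∞) = 2`.
The value of `S` comes from the antiderivative `(U - U³/3)/√2` of `U'² = (1 - U²) U' / √2`.
-/

open Real MeasureTheory

noncomputable def U (z : ℝ) : ℝ := Real.tanh (z / Real.sqrt 2)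

open Filter Topology Set

namespace Real

theorem hasDerivAt_tanh (x : ℝ) : HasDerivAt tanh (1 - tanh x ^ 2) x := by
  have h := (hasDerivAt_sinh x).div (hasDerivAt_cosh x) (cosh_pos x).ne'
  rw [show sinh / cosh = tanh from funext fun y => (tanh_eq_sinh_div_cosh y).symm] at h
  refine h.congr_deriv ?_
  have hc := (cosh_pos x).ne'
  rw [tanh_eq_sinh_div_cosh, div_pow, one_sub_div (pow_ne_zero 2 hc)]
  ring

theorem tanh_eq_one_sub (x : ℝ) : tanh x = 1 - 2 / (exp (2 * x) + 1) := by
  rw [tanh_eq, show 2 * x = x + x by ring, exp_add, exp_neg]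
  have := exp_pos x
  field_simp
  ring

theorem tendsto_tanh_atTop : Tendsto tanh atTop (𝓝 1) := by
  have hexp : Tendsto (fun x => exp (2 * x) + 1) atTop atTop :=
    tendsto_atTop_add_const_right _ _
      (tendsto_exp_atTop.comp (tendsto_id.const_mul_atTop two_pos))
  have h := (tendsto_const_nhds (x := (1 : ℝ))).sub
    ((tendsto_const_nhds (x := (2 : ℝ))).div_atTop hexp)
  rw [sub_zero] at h
  exact h.congr fun x => (tanh_eq_one_sub x).symm

theorem tendsto_tanh_atBot : Tendsto tanh atBot (𝓝 (-1)) := by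
  simpa using (tendsto_tanh_atTop.comp tendsto_neg_atBot_atTop).neg

end Real

theorem integrable_deriv_of_nonneg {g g' : ℝ → ℝ} {m n : ℝ}
    (hderiv : ∀ x, HasDerivAt g (g' x) x) (hg' : ∀ x, 0 ≤ g' x)
    (hbot : Tendsto g atBot (𝓝 m)) (htop : Tendsto g atTop (𝓝 n)) :
    Integrable g' := by
  have hIoi : IntegrableOn g' (Ioi 0) :=
    integrableOn_Ioi_deriv_of_nonneg' (fun x _ => hderiv x) (fun x _ => hg' x) htop
  have hreflect : IntegrableOn (fun x => g' (-x)) (Ioi 0) := by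
    refine integrableOn_Ioi_deriv_of_nonneg' (g := fun x => -g (-x)) (fun x _ => ?_)
      (fun x _ => hg' _) (hbot.comp tendsto_neg_atTop_atBot).neg
    simpa using ((hderiv (-x)).comp x (hasDerivAt_neg x)).fun_neg
  have hIio : IntegrableOn g' (Iio 0) := by
    simpa using
      IntegrableOn.comp_neg_Iio (c := 0) (f := fun x => g' (-x)) (by simpa using hreflect)
  rw [← integrableOn_univ, ← Iio_union_Ici (a := 0)]
  exact hIio.union (Iff.mpr integrableOn_Ici_iff_integrableOn_Ioi hIoi)

theorem hasDerivAt_wronskian {u u' u'' ψ ψ' q : ℝ → ℝ} {z : ℝ}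
    (hu : HasDerivAt u (u' z) z) (hu' : HasDerivAt u' (u'' z) z) (hψ : HasDerivAt ψ (ψ' z) z)
    (hψ' : HasDerivAt ψ' (q z * ψ z) z) :
    HasDerivAt (fun x => u' x * ψ x - u x * ψ' x) (-((q z * u z - u'' z) * ψ z)) z :=
  ((hu'.mul hψ).sub (hu.mul hψ')).congr_deriv (by ring)

theorem integral_mul_eq_zero_of_schrodinger_eq {u ψ ψ' q g : ℝ → ℝ}
    (hu : ContDiff ℝ 2 u) (hbu : ∃ C, ∀ z, |u z| ≤ C)
    (hbu' : ∃ C, ∀ z, |deriv u z| ≤ C) (hψ : ∀ z, HasDerivAt ψ (ψ' z) z)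
    (hψ' : ∀ z, HasDerivAt ψ' (q z * ψ z) z)
    (hψ_lim : Tendsto ψ (cocompact ℝ) (𝓝 0)) (hψ'_lim : Tendsto ψ' (cocompact ℝ) (𝓝 0))
    (heq : ∀ z, q z * u z - deriv (deriv u) z = g z) (hint : Integrable fun z => g z * ψ z) :
    ∫ z, g z * ψ z = 0 := by
  obtain ⟨C, hC⟩ := hbu
  obtain ⟨C', hC'⟩ := hbu'
  have hu_deriv : ∀ z, HasDerivAt u (deriv u z) z := fun z =>
    (hu.differentiable (by norm_num) z).hasDerivAt
  have hu'_deriv : ∀ z, HasDerivAt (deriv u) (deriv (deriv u) z) z := fun z =>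
    ((hu.iterate_deriv' 1 1).differentiable (by norm_num) z).hasDerivAt
  have hW_lim : Tendsto (fun z => deriv u z * ψ z - u z * ψ' z) (cocompact ℝ) (𝓝 0) := by
    simpa using (bdd_le_mul_tendsto_zero' C' (.of_forall hC') hψ_lim).sub
      (bdd_le_mul_tendsto_zero' C (.of_forall hC) hψ'_lim)
  rw [cocompact_eq_atBot_atTop, tendsto_sup] at hW_lim
  have hW := fun z => hasDerivAt_wronskian (hu_deriv z) (hu'_deriv z) (hψ z) (hψ' z)
  simp_rw [heq] at hW
  have h := integral_of_hasDerivAt_of_tendsto hW hint.neg hW_lim.1 hW_lim.2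
  rwa [integral_neg, sub_self, neg_eq_zero] at h

theorem hasDerivAt_U (z : ℝ) : HasDerivAt U ((1 - U z ^ 2) / √2) z := by
  have h := (hasDerivAt_tanh (z / √2)).comp z ((hasDerivAt_id z).div_const √2)
  exact h.congr_deriv (by simp [U, div_eq_mul_inv])

theorem deriv_U : deriv U = fun z => (1 - U z ^ 2) / √2 :=
  funext fun z => (hasDerivAt_U z).deriv

theorem hasDerivAt_deriv_U (z : ℝ) : HasDerivAt (deriv U) (U z ^ 3 - U z) z := by
  rw [deriv_U]
  refine (((hasDerivAt_U z).pow 2).const_sub 1).div_const √2 |>.congr_deriv ?_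
  have h2 : √2 ^ 2 = 2 := sq_sqrt zero_le_two
  field_simp
  linear_combination (U z - U z ^ 3) * h2

theorem hasDerivAt_U_cube_sub_U (z : ℝ) :
    HasDerivAt (fun x => U x ^ 3 - U x) ((3 * U z ^ 2 - 1) * deriv U z) z := by
  rw [deriv_U]
  exact (((hasDerivAt_U z).pow 3).sub (hasDerivAt_U z)).congr_deriv (by push_cast; ring)

theorem tendsto_U_atTop : Tendsto U atTop (𝓝 1) :=
  tendsto_tanh_atTop.comp (tendsto_id.atTop_div_const (by positivity))

theorem tendsto_U_atBot : Tendsto U atBot (𝓝 (-1)) :=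
  tendsto_tanh_atBot.comp (tendsto_id.atBot_div_const (by positivity))

theorem tendsto_comp_U_atTop {P : ℝ → ℝ} (hP : Continuous P) :
    Tendsto (fun z => P (U z)) atTop (𝓝 (P 1)) :=
  (hP.tendsto 1).comp tendsto_U_atTop

theorem tendsto_comp_U_atBot {P : ℝ → ℝ} (hP : Continuous P) :
    Tendsto (fun z => P (U z)) atBot (𝓝 (P (-1))) :=
  (hP.tendsto (-1)).comp tendsto_U_atBot

theorem tendsto_comp_U_cocompact {P : ℝ → ℝ} (hP : Continuous P) (hP₁ : P 1 = 0)
    (hP₂ : P (-1) = 0) : Tendsto (fun z => P (U z)) (cocompact ℝ) (𝓝 0) := by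
  rw [cocompact_eq_atBot_atTop, tendsto_sup]
  exact ⟨hP₂ ▸ tendsto_comp_U_atBot hP, hP₁ ▸ tendsto_comp_U_atTop hP⟩

theorem tendsto_deriv_U_cocompact : Tendsto (deriv U) (cocompact ℝ) (𝓝 0) := by
  rw [deriv_U]
  exact tendsto_comp_U_cocompact (P := fun u => (1 - u ^ 2) / √2) (by fun_prop) (by norm_num)
    (by norm_num)

theorem tendsto_U_cube_sub_U_cocompact :
    Tendsto (fun z => U z ^ 3 - U z) (cocompact ℝ) (𝓝 0) :=
  tendsto_comp_U_cocompact (P := fun u => u ^ 3 - u) (by fun_prop) (by norm_num) (by norm_num)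

theorem sq_U_le_one (z : ℝ) : U z ^ 2 ≤ 1 :=
  sq_le_one_iff_abs_le_one _ |>.2 <| abs_le.2 ⟨(neg_one_lt_tanh _).le, (tanh_lt_one _).le⟩

theorem integrable_deriv_U : Integrable (deriv U) := by
  rw [deriv_U]
  exact integrable_deriv_of_nonneg hasDerivAt_U
    (fun z => div_nonneg (sub_nonneg.2 (sq_U_le_one z)) (sqrt_nonneg 2)) tendsto_U_atBot
    tendsto_U_atTop

theorem integral_deriv_U : ∫ z, deriv U z = 2 := by
  rw [integral_of_hasDerivAt_of_tendsto (fun z => (hasDerivAt_U z).congr_deriv (by rw [deriv_U]))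
    integrable_deriv_U tendsto_U_atBot tendsto_U_atTop]
  norm_num

theorem hasDerivAt_U_sub_U_cube_div (z : ℝ) :
    HasDerivAt (fun x => (U x - U x ^ 3 / 3) / √2) (deriv U z ^ 2) z := by
  refine (((hasDerivAt_U z).sub (((hasDerivAt_U z).pow 3).div_const 3)).div_const √2
    ).congr_deriv ?_
  rw [deriv_U]
  field_simp
  ring

theorem continuous_sub_cube_div : Continuous fun u : ℝ => (u - u ^ 3 / 3) / √2 := by
  fun_prop

theorem integrable_deriv_U_sq : Integrable fun z => deriv U z ^ 2 :=
  integrable_deriv_of_nonneg hasDerivAt_U_sub_U_cube_div (fun _ => sq_nonneg _)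
    (tendsto_comp_U_atBot continuous_sub_cube_div) (tendsto_comp_U_atTop continuous_sub_cube_div)

theorem integral_deriv_U_sq : ∫ z, deriv U z ^ 2 = 2 * √2 / 3 := by
  rw [integral_of_hasDerivAt_of_tendsto hasDerivAt_U_sub_U_cube_div integrable_deriv_U_sq
    (tendsto_comp_U_atBot continuous_sub_cube_div) (tendsto_comp_U_atTop continuous_sub_cube_div)]
  have h2 : √2 ^ 2 = 2 := sq_sqrt zero_le_two
  field_simp
  linear_combination (-2 : ℝ) * h2

/-- Solvability condition for the first-order inner correction: if `u₁` is a bounded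
`C²` function with bounded derivative satisfying `F″(U)u₁ − u₁″ − κU′ = c` on `ℝ`
(with `F″(u) = 3u² − 1`), then `c = −κS/2` where `S = ∫ U′² = 2√2/3`. -/
theorem solvability_condition (κ c : ℝ) (u₁ : ℝ → ℝ)
    (hu₁ : ContDiff ℝ 2 u₁)
    (hbd : ∃ C : ℝ, ∀ z : ℝ, |u₁ z| ≤ C)
    (hbd' : ∃ C : ℝ, ∀ z : ℝ, |deriv u₁ z| ≤ C)
    (heq : ∀ z : ℝ, (3 * (U z) ^ 2 - 1) * u₁ z - deriv (deriv u₁) z - κ * deriv U z = c) :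
    c = -(κ * (∫ z : ℝ, (deriv U z) ^ 2)) / 2 ∧
    (∫ z : ℝ, (deriv U z) ^ 2) = 2 * Real.sqrt 2 / 3 := by
  have hsplit : ∀ z, (κ * deriv U z + c) * deriv U z = κ * deriv U z ^ 2 + c * deriv U z :=
    fun z => by ring
  have horth := integral_mul_eq_zero_of_schrodinger_eq (g := fun z => κ * deriv U z + c) hu₁ hbd
    hbd' hasDerivAt_deriv_U hasDerivAt_U_cube_sub_U tendsto_deriv_U_cocompact
    tendsto_U_cube_sub_U_cocompact (fun z => by linarith [heq z])
    (by simpa only [hsplit] using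
      (integrable_deriv_U_sq.const_mul κ).fun_add (integrable_deriv_U.const_mul c))
  simp only [hsplit] at horth
  rw [integral_add (integrable_deriv_U_sq.const_mul κ) (integrable_deriv_U.const_mul c),
    integral_const_mul, integral_const_mul, integral_deriv_U] at horth
  exact ⟨by linarith, integral_deriv_U_sq⟩
end

section
/- Let F(u) = (1/4)(u²−1)² and b ∈ ℝ. Suppose u : ℝ → ℝ is twice continuously differentiable, bounded, satisfies u″(z) = F′(u(z)) − b for all z ∈ ℝ, and has limits u(z) → L⁺ as z → +∞ and u(z) → L⁻ as z → −∞ with L⁺ ≠ L⁻. Then b = 0 and {L⁺, L⁻} = {1, −1}; that is, the only pairs of pure phases that a bounded standing-wave profile of the Cahn–Hilliard inner equation can connect are u = +1 and u = −1, with vanishing leading-order chemical potential. -/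
/-!
The energy `u'² / 2 - (F u - b u)` is conserved along a profile. At either end, where `u → L`,
both `u''` and `u'²` converge, and both limits vanish: a bounded function cannot have a derivative
with nonzero limit, and this applies to `u'` and to `u u'`. Hence `F' L = b` at both ends and
`F L - b L` takes the same value there, so the line of slope `b` touches the graph of `F` at the two
distinct points `L⁺, L⁻`. For the symmetric double well that common tangent is only the
horizontal one through the wells `±1`.
-/

open Real Filter

/-- Derivative of the double-well potential `F(u) = (1/4)(u²−1)²`: `F′(u) = u³ − u`. -/
noncomputable def F' (u : ℝ) : ℝ := u ^ 3 - u

open Topology Asymptotics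

theorem tendsto_atTop_of_tendsto_deriv_of_pos {f : ℝ → ℝ} (hf : Differentiable ℝ f) {c : ℝ}
    (hc : Tendsto (deriv f) atTop (𝓝 c)) (hc0 : 0 < c) : Tendsto f atTop atTop := by
  obtain ⟨X, hX⟩ := eventually_atTop.mp (hc.eventually (eventually_ge_nhds (half_lt_self hc0)))
  have grow : ∀ x ≥ X, c / 2 * (x + -X) + f X ≤ f x := fun x hx => by
    have := (convex_Ici X).mul_sub_le_image_sub_of_le_deriv hf.continuous.continuousOn
      hf.differentiableOn (fun y hy => hX y (by rw [interior_Ici] at hy; exact hy.le))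
      X Set.self_mem_Ici x hx hx
    linarith
  refine tendsto_atTop_mono' atTop (eventually_atTop.mpr ⟨X, grow⟩) ?_
  exact tendsto_atTop_add_const_right _ _
    ((tendsto_atTop_add_const_right _ _ tendsto_id).const_mul_atTop (half_pos hc0))

theorem eq_zero_of_isBigO_one_of_tendsto_deriv_atTop {f : ℝ → ℝ} (hf : Differentiable ℝ f)
    (hbdd : f =O[atTop] fun _ => (1 : ℝ)) {c : ℝ} (hc : Tendsto (deriv f) atTop (𝓝 c)) :
    c = 0 := by
  have unbounded : ∀ g : ℝ → ℝ, Tendsto g atTop atTop → ¬ g =O[atTop] fun _ => (1 : ℝ) :=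
    fun g hg hgO => not_isBoundedUnder_of_tendsto_atTop (tendsto_norm_atTop_atTop.comp hg)
      ((isBigO_one_iff ℝ).mp hgO)
  rcases lt_trichotomy c 0 with hneg | hzero | hpos
  · refine absurd hbdd.neg_left (unbounded _ (tendsto_atTop_of_tendsto_deriv_of_pos hf.neg
      (c := -c) ?_ (neg_pos.mpr hneg)))
    rw [show deriv (fun x => -f x) = fun x => -deriv f x from funext fun _ => deriv.fun_neg]
    exact hc.neg
  · exact hzero
  · exact absurd hbdd (unbounded f (tendsto_atTop_of_tendsto_deriv_of_pos hf hc hpos))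

theorem eq_zero_of_isBigO_one_of_tendsto_deriv_atBot {f : ℝ → ℝ} (hf : Differentiable ℝ f)
    (hbdd : f =O[atBot] fun _ => (1 : ℝ)) {c : ℝ} (hc : Tendsto (deriv f) atBot (𝓝 c)) :
    c = 0 := by
  have hrefl : Tendsto (deriv fun x => f (-x)) atTop (𝓝 (-c)) := by
    rw [funext (deriv_comp_neg f)]
    exact (hc.comp tendsto_neg_atTop_atBot).neg
  simpa using eq_zero_of_isBigO_one_of_tendsto_deriv_atTop (hf.comp differentiable_neg)
    (hbdd.comp_tendsto tendsto_neg_atTop_atBot) hrefl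

theorem tendsto_deriv_deriv_eq_zero_and_sq_deriv_eq_zero {l : Filter ℝ}
    (hl : l = atTop ∨ l = atBot) {u : ℝ → ℝ} (hu : Differentiable ℝ u)
    (hu' : Differentiable ℝ (deriv u)) {L c A : ℝ} (hL : Tendsto u l (𝓝 L))
    (hc : Tendsto (deriv (deriv u)) l (𝓝 c)) (hA : Tendsto (fun z => deriv u z ^ 2) l (𝓝 A)) :
    c = 0 ∧ A = 0 := by
  have deriv_limit_eq_zero : ∀ f : ℝ → ℝ, Differentiable ℝ f → (f =O[l] fun _ => (1 : ℝ)) →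
      ∀ d, Tendsto (deriv f) l (𝓝 d) → d = 0 := by
    rcases hl with rfl | rfl
    exacts [fun f hf hbdd _ hd => eq_zero_of_isBigO_one_of_tendsto_deriv_atTop hf hbdd hd,
      fun f hf hbdd _ hd => eq_zero_of_isBigO_one_of_tendsto_deriv_atBot hf hbdd hd]
  have hu'_bdd : deriv u =O[l] fun _ => (1 : ℝ) := by
    refine IsBigO.of_abs_left ?_
    simpa only [Real.sqrt_sq_eq_abs] using hA.sqrt.isBigO_one ℝ
  have hc0 : c = 0 := deriv_limit_eq_zero _ hu' hu'_bdd c hc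
  -- `u u'` stays bounded while its derivative `u' ^ 2 + u u''` tends to `A + L c = A`.
  have hprod : deriv (u * deriv u) = fun z => deriv u z ^ 2 + u z * deriv (deriv u) z :=
    funext fun z => by rw [deriv_mul (hu z) (hu' z)]; ring
  refine ⟨hc0, deriv_limit_eq_zero _ (hu.mul hu') ?_ A ?_⟩
  · simpa using (hL.isBigO_one ℝ).mul hu'_bdd
  · rw [hprod]
    simpa [hc0] using hA.add (hL.mul hc)

theorem sq_deriv_div_two_sub_comp_eq {V V' : ℝ → ℝ} (hV : ∀ x, HasDerivAt V (V' x) x)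
    {u : ℝ → ℝ} (hu : Differentiable ℝ u) (hu' : Differentiable ℝ (deriv u))
    (hode : ∀ z, deriv (deriv u) z = V' (u z)) (z : ℝ) :
    deriv u z ^ 2 / 2 - V (u z) = deriv u 0 ^ 2 / 2 - V (u 0) := by
  have henergy : ∀ z, HasDerivAt (fun z => deriv u z ^ 2 / 2 - V (u z)) 0 z := fun z => by
    refine ((((hu' z).hasDerivAt.pow 2).div_const 2).sub
      ((hV (u z)).comp z (hu z).hasDerivAt)).congr_deriv ?_
    rw [hode z]
    ring
  exact is_const_of_deriv_eq_zero (fun z => (henergy z).differentiableAt)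
    (fun z => (henergy z).deriv) z 0

noncomputable def F (u : ℝ) : ℝ := (u ^ 2 - 1) ^ 2 / 4

theorem hasDerivAt_F (x : ℝ) : HasDerivAt F (F' x) x := by
  refine ((((hasDerivAt_id' x).pow 2).sub_const 1).pow 2 |>.div_const 4).congr_deriv ?_
  simp only [F', Pi.pow_apply]
  ring

theorem eq_pure_phases_of_common_tangent {b p m : ℝ} (hne : p ≠ m) (hp : F' p = b)
    (hm : F' m = b) (hlevel : F p - b * p = F m - b * m) :
    b = 0 ∧ ((p = 1 ∧ m = -1) ∨ (p = -1 ∧ m = 1)) := by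
  simp only [F, F'] at hp hm hlevel
  have hsub : p - m ≠ 0 := sub_ne_zero.mpr hne
  have hsum : p ^ 2 + p * m + m ^ 2 = 1 := by
    have : (p - m) * (p ^ 2 + p * m + m ^ 2 - 1) = 0 := by linear_combination hp - hm
    linarith [(mul_eq_zero.mp this).resolve_left hsub]
  have hfac : (p + m) * (3 * p * m - 1) = 0 := by
    have : (p - m) * ((p + m) * (3 * p * m - 1)) = 0 := by
      linear_combination 4 * hlevel - (p - m) * (m - 3 * p) * hsum - 4 * (p - m) * hp
    exact (mul_eq_zero.mp this).resolve_left hsub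
  rcases mul_eq_zero.mp hfac with hopp | hpm
  · obtain rfl : m = -p := by linarith
    have hp2 : (p - 1) * (p + 1) = 0 := by linear_combination hsum
    refine ⟨by linear_combination -hp + p * hsum, ?_⟩
    rcases mul_eq_zero.mp hp2 with h | h
    exacts [Or.inl ⟨by linarith, by linarith⟩, Or.inr ⟨by linarith, by linarith⟩]
  · exact absurd (sub_eq_zero.mp (pow_eq_zero_iff two_ne_zero |>.mp
      (by linear_combination hsum - hpm : (p - m) ^ 2 = 0))) hne

theorem bounded_profile_connects_pure_phases_general (b Lp Lm : ℝ) (u : ℝ → ℝ)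
    (hu : ContDiff ℝ 2 u)
    (heq : ∀ z : ℝ, deriv (deriv u) z = F' (u z) - b)
    (htop : Tendsto u atTop (nhds Lp))
    (hbot : Tendsto u atBot (nhds Lm))
    (hne : Lp ≠ Lm) :
    b = 0 ∧ ((Lp = 1 ∧ Lm = -1) ∨ (Lp = -1 ∧ Lm = 1)) := by
  have hu1 : Differentiable ℝ u := hu.differentiable two_ne_zero
  have hu2 : Differentiable ℝ (deriv u) :=
    ((contDiff_succ_iff_deriv (n := 1)).mp hu).2.2.differentiable one_ne_zero
  have henergy := sq_deriv_div_two_sub_comp_eq (V := fun x => F x - b * x)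
    (V' := fun x => F' x - b)
    (fun x => ((hasDerivAt_F x).sub ((hasDerivAt_id x).const_mul b)).congr_deriv (by simp))
    hu1 hu2 heq
  set E := deriv u 0 ^ 2 / 2 - (F (u 0) - b * u 0)
  have hF' : Continuous F' := by unfold F'; fun_prop
  have hF : Continuous F := by unfold F; fun_prop
  have end_state : ∀ {l : Filter ℝ} {L : ℝ}, (l = atTop ∨ l = atBot) → Tendsto u l (𝓝 L) →
      F' L = b ∧ F L - b * L = -E := fun {l L} hl hL => by
    have hc : Tendsto (deriv (deriv u)) l (𝓝 (F' L - b)) := by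
      rw [funext heq]
      exact (hF'.tendsto L).comp hL |>.sub_const b
    have hA : Tendsto (fun z => deriv u z ^ 2) l (𝓝 (2 * (E + (F L - b * L)))) := by
      have : (fun z => deriv u z ^ 2) = fun z => 2 * (E + (F (u z) - b * u z)) :=
        funext fun z => by linarith [henergy z]
      rw [this]
      exact (((hF.tendsto L).comp hL).sub (hL.const_mul b)).const_add E |>.const_mul 2
    obtain ⟨hc0, hA0⟩ := tendsto_deriv_deriv_eq_zero_and_sq_deriv_eq_zero hl hu1 hu2 hL hc hA
    constructor <;> linarith
  obtain ⟨hp, hEp⟩ := end_state (Or.inl rfl) htop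
  obtain ⟨hm, hEm⟩ := end_state (Or.inr rfl) hbot
  exact eq_pure_phases_of_common_tangent hne hp hm (hEp.trans hEm.symm)

/-- A bounded standing-wave profile of the Cahn–Hilliard inner equation
`u″ = F′(u) − b` connecting two distinct limits `L⁺ ≠ L⁻` forces `b = 0`
and `{L⁺, L⁻} = {1, −1}`. -/
theorem bounded_profile_connects_pure_phases (b Lp Lm : ℝ) (u : ℝ → ℝ)
    (hu : ContDiff ℝ 2 u)
    (hbd : ∃ C : ℝ, ∀ z : ℝ, |u z| ≤ C)
    (heq : ∀ z : ℝ, deriv (deriv u) z = F' (u z) - b)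
    (htop : Tendsto u atTop (nhds Lp))
    (hbot : Tendsto u atBot (nhds Lm))
    (hne : Lp ≠ Lm) :
    b = 0 ∧ ((Lp = 1 ∧ Lm = -1) ∨ (Lp = -1 ∧ Lm = 1)) :=
  bounded_profile_connects_pure_phases_general b Lp Lm u hu heq htop hbot hne
end

section
/- Let 0 < α < 1, N ≥ 1 and λ > 0. Suppose u, μ : ℝ^N × (0,∞) → ℝ are such that for each x the map t ↦ u(x,t) is continuously differentiable on [0,∞), for each t the map x ↦ μ(x,t) is twice continuously differentiable, and the bulk equation of the time-fractional Mullins–Sekerka model holds: ∂_t^α u(x,t) = Δμ(x,t) for all (x,t) (Caputo derivative in t, Laplacian in x). Define û(x,t) = u(λx, λ^{3/α} t) and μ̂(x,t) = λ·μ(λx, λ^{3/α} t). Then ∂_t^α û(x,t) = Δμ̂(x,t) for all (x,t) ∈ ℝ^N × (0,∞). (This scaling invariance, with length scale X = λ, time scale T = λ^{3/α} satisfying T^α = X³, and chemical-potential scale M = X^{−1}, underlies the coarsening rate α/3.) -/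
open Real MeasureTheory

/-- The Caputo fractional derivative of order `α` of `f` at `t`:
`∂_t^α f(t) = (1/Γ(1−α)) ∫_0^t (t−τ)^{−α} f′(τ) dτ`. -/
noncomputable def caputoDeriv (α : ℝ) (f : ℝ → ℝ) (t : ℝ) : ℝ :=
  (1 / Real.Gamma (1 - α)) * ∫ τ in (0:ℝ)..t, (t - τ) ^ (-α) * deriv f τ

/-- The Laplacian of a scalar function on `ℝ^N`, as the sum of second partial
derivatives along the standard coordinate directions. -/
noncomputable def laplacian {N : ℕ} (f : EuclideanSpace ℝ (Fin N) → ℝ)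
    (x : EuclideanSpace ℝ (Fin N)) : ℝ :=
  ∑ i : Fin N,
    fderiv ℝ (fun y => fderiv ℝ f y (EuclideanSpace.single i (1:ℝ))) x
      (EuclideanSpace.single i (1:ℝ))

/-!
Both sides of `∂_t^α u = Δμ` are homogeneous under dilations: substituting `σ = c τ` in the
Caputo integral shows that `t ↦ f (c t)` has Caputo derivative `c ^ α` times that of `f` at
`c t`, while `y ↦ a f (c y)` has Laplacian `a c²` times that of `f` at `c y`. With
`c = λ^{3/α}` in time, `c = λ` in space and `a = λ`, both factors equal `λ³`.
-/

section DirectionalDerivative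

variable {𝕜 E : Type*} [NontriviallyNormedField 𝕜] [NormedAddCommGroup E] [NormedSpace 𝕜 E]

theorem fderiv_const_mul_apply (a : 𝕜) (g : E → 𝕜) (x v : E) :
    fderiv 𝕜 (fun y => a * g y) x v = a * fderiv 𝕜 g x v := by
  change fderiv 𝕜 (a • g) x v = _
  rw [fderiv_const_smul_field, Pi.smul_apply, smul_apply, smul_eq_mul]

theorem fderiv_comp_smul_apply (c : 𝕜) (g : E → 𝕜) (x v : E) :
    fderiv 𝕜 (fun y => g (c • y)) x v = c * fderiv 𝕜 g (c • x) v := by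
  rw [fderiv_comp_smul, smul_apply, smul_eq_mul]

end DirectionalDerivative

section Laplacian

variable {N : ℕ}

theorem laplacian_const_mul (a : ℝ) (f : EuclideanSpace ℝ (Fin N) → ℝ)
    (x : EuclideanSpace ℝ (Fin N)) :
    laplacian (fun y => a * f y) x = a * laplacian f x := by
  simp only [laplacian, fderiv_const_mul_apply, Finset.mul_sum]

theorem laplacian_comp_smul (c : ℝ) (f : EuclideanSpace ℝ (Fin N) → ℝ)
    (x : EuclideanSpace ℝ (Fin N)) :
    laplacian (fun y => f (c • y)) x = c ^ 2 * laplacian f (c • x) := by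
  simp only [laplacian, fderiv_comp_smul_apply, fderiv_const_mul_apply, Finset.mul_sum]
  refine Finset.sum_congr rfl fun i _ => ?_
  rw [fderiv_comp_smul_apply c (fun y => fderiv ℝ f y _)]
  ring

end Laplacian

theorem caputoDeriv_comp_mul_left (α : ℝ) (f : ℝ → ℝ) {c : ℝ} (hc : 0 < c) {t : ℝ}
    (ht : 0 ≤ t) :
    caputoDeriv α (fun s => f (c * s)) t = c ^ α * caputoDeriv α f (c * t) := by
  have integrand_eq : ∀ τ ∈ Set.uIcc 0 t, (t - τ) ^ (-α) * deriv (fun s => f (c * s)) τ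
      = c ^ α * c * ((c * t - c * τ) ^ (-α) * deriv f (c * τ)) := by
    intro τ hτ
    rw [Set.uIcc_of_le ht] at hτ
    rw [deriv_comp_mul_left, smul_eq_mul, ← mul_sub, mul_rpow hc.le (by linarith [hτ.2]),
      rpow_neg hc.le]
    field_simp
  unfold caputoDeriv
  rw [intervalIntegral.integral_congr integrand_eq, intervalIntegral.integral_const_mul,
    intervalIntegral.integral_comp_mul_left (fun σ => (c * t - σ) ^ (-α) * deriv f σ) hc.ne',
    mul_zero, smul_eq_mul]
  field_simp

theorem mullins_sekerka_bulk_scaling_invariance_general (α : ℝ) (hα0 : 0 < α)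
    {N : ℕ} (lam : ℝ) (hlam : 0 < lam)
    (u μ : EuclideanSpace ℝ (Fin N) → ℝ → ℝ)
    (heq : ∀ x, ∀ t : ℝ, 0 < t →
      caputoDeriv α (u x) t = laplacian (fun y => μ y t) x) :
    ∀ x, ∀ t : ℝ, 0 < t →
      caputoDeriv α (fun s => u (lam • x) (lam ^ (3 / α) * s)) t
        = laplacian (fun y => lam * μ (lam • y) (lam ^ (3 / α) * t)) x := by
  intro x t ht
  have hT : 0 < lam ^ (3 / α) := rpow_pos_of_pos hlam _
  have hTα : (lam ^ (3 / α)) ^ α = lam ^ 3 := by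
    rw [← rpow_mul hlam.le, div_mul_cancel₀ _ hα0.ne', ← rpow_natCast]
    norm_num
  rw [caputoDeriv_comp_mul_left α _ hT ht.le, heq _ _ (mul_pos hT ht), laplacian_const_mul,
    laplacian_comp_smul (f := fun y => μ y _), hTα]
  ring

/-- Scaling invariance of the bulk equation `∂_t^α u = Δμ` of the time-fractional
Mullins–Sekerka model: with `X = λ`, `T = λ^{3/α}` (so `T^α = X³`) and `M = X⁻¹`,
the rescaled pair `û(x,t) = u(λx, λ^{3/α}t)`, `μ̂(x,t) = λ μ(λx, λ^{3/α}t)`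
satisfies the same equation; this underlies the `α/3` coarsening rate. -/
theorem mullins_sekerka_bulk_scaling_invariance (α : ℝ) (hα0 : 0 < α) (hα1 : α < 1)
    {N : ℕ} (hN : 1 ≤ N) (lam : ℝ) (hlam : 0 < lam)
    (u μ : EuclideanSpace ℝ (Fin N) → ℝ → ℝ)
    (hu : ∀ x, ContDiffOn ℝ 1 (u x) (Set.Ici 0))
    (hμ : ∀ t : ℝ, 0 < t → ContDiff ℝ 2 (fun x => μ x t))
    (heq : ∀ x, ∀ t : ℝ, 0 < t →
      caputoDeriv α (u x) t = laplacian (fun y => μ y t) x) :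
    ∀ x, ∀ t : ℝ, 0 < t →
      caputoDeriv α (fun s => u (lam • x) (lam ^ (3 / α) * s)) t
        = laplacian (fun y => lam * μ (lam • y) (lam ^ (3 / α) * t)) x :=
  mullins_sekerka_bulk_scaling_invariance_general α hα0 lam hlam u μ heq
end
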